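/- Monotone motion of the extreme aggregates: let a : ℝ → ℝ be continuous, odd, nondecreasing, with a(s) > 0 for all s > 0, and A(x) = ∫_0^x a(s) ds. Let n ≥ 2, m_1, …, m_n > 0, and let x_1, …, x_n : [0,T] → ℝ be C¹ with x_1(t) < ⋯ < x_n(t) for all t, satisfying the aggregate ODE system m_i x_i'(t) = A(d_i(t) + m_i/2) − A(d_i(t) − m_i/2) with d_i(t) = ∑_{j≠i} m_j K'(x_i(t) − x_j(t)). Then for every t ∈ [0,T] the leftmost aggregate moves strictly to the right and the rightmost strictly to the left: x_1'(t) > 0 and x_n'(t) < 0; consequently t ↦ x_n(t) − x_1(t) is strictly decreasing on [0,T]. -/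

import Mathlib

open MeasureTheory

/-- The pointwise derivative `K'(x) = -(1/2) sgn(x) e^{-|x|}` (with `sgn 0 = 0`). -/
noncomputable def Kker' (x : ℝ) : ℝ := -(1/2) * Real.sign x * Real.exp (-|x|)

/-- The antiderivative `A(x) = ∫_0^x a(s) ds`. -/
noncomputable def Aanti (a : ℝ → ℝ) (x : ℝ) : ℝ := ∫ s in (0:ℝ)..x, a s

/-!
The leftmost aggregate only feels the attraction `m_j K'(x_1 - x_j) > 0` of aggregates to its
right, so `d_1 > 0`; symmetrically `d_n < 0`. Since `a` is odd and positive on `(0, ∞)`, the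
antiderivative `A` is even and strictly increasing in `|x|`, so for `d > 0` we get
`A(d + m/2) > A(d - m/2)` because `|d - m/2| < d + m/2`. Hence `x_1' > 0 > x_n'`, and the
width `x_n - x_1` has negative derivative.
-/

lemma Kker'_pos_of_neg {y : ℝ} (hy : y < 0) : 0 < Kker' y := by
  unfold Kker'
  rw [Real.sign_of_neg hy]
  nlinarith [Real.exp_pos (-|y|)]

lemma Kker'_neg_of_pos {y : ℝ} (hy : 0 < y) : Kker' y < 0 := by
  unfold Kker'
  rw [Real.sign_of_pos hy]
  nlinarith [Real.exp_pos (-|y|)]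

section Aanti

variable {a : ℝ → ℝ}

lemma Aanti_neg (haodd : ∀ s, a (-s) = -a s) (u : ℝ) : Aanti a (-u) = Aanti a u := by
  have h := intervalIntegral.integral_comp_neg (a := (0:ℝ)) (b := u) (f := a)
  simp only [haodd, neg_zero, intervalIntegral.integral_neg] at h
  rw [Aanti, Aanti, intervalIntegral.integral_symm, ← h, neg_neg]

lemma Aanti_abs (haodd : ∀ s, a (-s) = -a s) (u : ℝ) : Aanti a |u| = Aanti a u := by
  rcases abs_choice u with h | h <;> rw [h]
  exact Aanti_neg haodd u

lemma Aanti_strictMonoOn (ha : Continuous a) (hapos : ∀ s > (0:ℝ), 0 < a s) :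
    StrictMonoOn (Aanti a) (Set.Ici 0) := by
  intro u hu v _ huv
  have hsub : Aanti a v - Aanti a u = ∫ s in u..v, a s :=
    intervalIntegral.integral_interval_sub_left (ha.intervalIntegrable 0 v)
      (ha.intervalIntegrable 0 u)
  have hpos : 0 < ∫ s in u..v, a s :=
    intervalIntegral.intervalIntegral_pos_of_pos_on (ha.intervalIntegrable u v)
      (fun s hs => hapos s (lt_of_le_of_lt hu hs.1)) huv
  linarith

lemma Aanti_lt_of_abs_lt (ha : Continuous a) (haodd : ∀ s, a (-s) = -a s)
    (hapos : ∀ s > (0:ℝ), 0 < a s) {u v : ℝ} (h : |u| < |v|) : Aanti a u < Aanti a v := by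
  rw [← Aanti_abs haodd u, ← Aanti_abs haodd v]
  exact Aanti_strictMonoOn ha hapos (abs_nonneg u) (abs_nonneg v) h

lemma Aanti_sub_lt_Aanti_add (ha : Continuous a) (haodd : ∀ s, a (-s) = -a s)
    (hapos : ∀ s > (0:ℝ), 0 < a s) {d h : ℝ} (hd : 0 < d) (hh : 0 < h) :
    Aanti a (d - h) < Aanti a (d + h) := by
  refine Aanti_lt_of_abs_lt ha haodd hapos ?_
  rw [abs_of_pos (by linarith : 0 < d + h), abs_lt]
  constructor <;> linarith

lemma Aanti_add_lt_Aanti_sub (ha : Continuous a) (haodd : ∀ s, a (-s) = -a s)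
    (hapos : ∀ s > (0:ℝ), 0 < a s) {d h : ℝ} (hd : d < 0) (hh : 0 < h) :
    Aanti a (d + h) < Aanti a (d - h) := by
  calc Aanti a (d + h) = Aanti a (-d - h) := by rw [← Aanti_neg haodd]; ring_nf
    _ < Aanti a (-d + h) := Aanti_sub_lt_Aanti_add ha haodd hapos (neg_pos.mpr hd) hh
    _ = Aanti a (d - h) := by rw [← Aanti_neg haodd (d - h)]; ring_nf

lemma pos_of_mul_eq_Aanti_sub (ha : Continuous a) (haodd : ∀ s, a (-s) = -a s)
    (hapos : ∀ s > (0:ℝ), 0 < a s) {μ d v : ℝ} (hμ : 0 < μ) (hd : 0 < d)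
    (h : μ * v = Aanti a (d + μ / 2) - Aanti a (d - μ / 2)) : 0 < v := by
  have := Aanti_sub_lt_Aanti_add ha haodd hapos hd (half_pos hμ)
  exact pos_of_mul_pos_right (by linarith) hμ.le

lemma neg_of_mul_eq_Aanti_sub (ha : Continuous a) (haodd : ∀ s, a (-s) = -a s)
    (hapos : ∀ s > (0:ℝ), 0 < a s) {μ d v : ℝ} (hμ : 0 < μ) (hd : d < 0)
    (h : μ * v = Aanti a (d + μ / 2) - Aanti a (d - μ / 2)) : v < 0 := by
  have := Aanti_add_lt_Aanti_sub ha haodd hapos hd (half_pos hμ)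
  exact neg_of_mul_neg_right (by linarith) hμ.le

end Aanti

section Kker'

variable {ι : Type*} {s : Finset ι} {m y : ι → ℝ} {y₀ : ℝ}

lemma sum_mul_Kker'_pos (hs : s.Nonempty) (hm : ∀ j ∈ s, 0 < m j)
    (hy : ∀ j ∈ s, y₀ < y j) :
    0 < ∑ j ∈ s, m j * Kker' (y₀ - y j) :=
  Finset.sum_pos (fun j hj => mul_pos (hm j hj) (Kker'_pos_of_neg (sub_neg.mpr (hy j hj)))) hs

lemma sum_mul_Kker'_neg (hs : s.Nonempty) (hm : ∀ j ∈ s, 0 < m j)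
    (hy : ∀ j ∈ s, y j < y₀) :
    ∑ j ∈ s, m j * Kker' (y₀ - y j) < 0 :=
  Finset.sum_neg
    (fun j hj => mul_neg_of_pos_of_neg (hm j hj) (Kker'_neg_of_pos (sub_pos.mpr (hy j hj)))) hs

end Kker'

lemma Fin.univ_erase_nonempty {n : ℕ} (hn : 2 ≤ n) (i : Fin n) :
    (Finset.univ.erase i).Nonempty := by
  rw [← Finset.card_pos, Finset.card_erase_of_mem (Finset.mem_univ i), Finset.card_univ,
    Fintype.card_fin]
  omega

lemma Fin.mk_zero_lt_of_ne {n : ℕ} (hn : 0 < n) {j : Fin n} (hj : j ≠ ⟨0, hn⟩) :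
    (⟨0, hn⟩ : Fin n) < j := by
  simp only [Ne, Fin.ext_iff, Fin.lt_def] at hj ⊢
  omega

lemma Fin.lt_mk_sub_one_of_ne {n : ℕ} (hn : n - 1 < n) {j : Fin n} (hj : j ≠ ⟨n - 1, hn⟩) :
    j < ⟨n - 1, hn⟩ := by
  simp only [Ne, Fin.ext_iff, Fin.lt_def] at hj ⊢
  omega

/-- Monotone motion of the extreme aggregates: for the aggregate ODE system with a
continuous, odd, nondecreasing velocity law `a`, positive on positive reals, the leftmost
aggregate moves strictly to the right, the rightmost strictly to the left, and the total
width `x_n - x_1` is strictly decreasing on `[0,T]`. -/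
theorem stmt14 (n : ℕ) (hn : 2 ≤ n) (T : ℝ)
    (m : Fin n → ℝ) (hm : ∀ i, 0 < m i)
    (x : Fin n → ℝ → ℝ) (hreg : ∀ i, ContDiff ℝ 1 (x i))
    (horder : ∀ t ∈ Set.Icc (0:ℝ) T, StrictMono fun i => x i t)
    (a : ℝ → ℝ) (ha : Continuous a) (haodd : ∀ s, a (-s) = -a s)
    (hapos : ∀ s > (0:ℝ), 0 < a s)
    (d : Fin n → ℝ → ℝ)
    (hd : d = fun i t => ∑ j ∈ Finset.univ.erase i, m j * Kker' (x i t - x j t))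
    (hode : ∀ i, ∀ t ∈ Set.Icc (0:ℝ) T,
      m i * deriv (x i) t = Aanti a (d i t + m i / 2) - Aanti a (d i t - m i / 2)) :
    (∀ t ∈ Set.Icc (0:ℝ) T,
      0 < deriv (x ⟨0, by omega⟩) t ∧ deriv (x ⟨n - 1, by omega⟩) t < 0) ∧
    StrictAntiOn (fun t => x ⟨n - 1, by omega⟩ t - x ⟨0, by omega⟩ t)
      (Set.Icc (0:ℝ) T) := by
  have hderiv : ∀ t ∈ Set.Icc (0:ℝ) T,
      0 < deriv (x ⟨0, by omega⟩) t ∧ deriv (x ⟨n - 1, by omega⟩) t < 0 := by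
    intro t ht
    have hleft : 0 < d ⟨0, by omega⟩ t := hd ▸ sum_mul_Kker'_pos
      (Fin.univ_erase_nonempty hn _) (fun j _ => hm j)
      fun j hj => horder t ht (Fin.mk_zero_lt_of_ne _ (Finset.ne_of_mem_erase hj))
    have hright : d ⟨n - 1, by omega⟩ t < 0 := hd ▸ sum_mul_Kker'_neg
      (Fin.univ_erase_nonempty hn _) (fun j _ => hm j)
      fun j hj => horder t ht (Fin.lt_mk_sub_one_of_ne _ (Finset.ne_of_mem_erase hj))
    exact ⟨pos_of_mul_eq_Aanti_sub ha haodd hapos (hm _) hleft (hode _ t ht),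
      neg_of_mul_eq_Aanti_sub ha haodd hapos (hm _) hright (hode _ t ht)⟩
  have hdiff : ∀ i, Differentiable ℝ (x i) := fun i => (hreg i).differentiable one_ne_zero
  refine ⟨hderiv, strictAntiOn_of_deriv_neg (convex_Icc 0 T)
    ((hdiff _).continuous.sub (hdiff _).continuous).continuousOn fun t ht => ?_⟩
  rw [interior_Icc] at ht
  rw [deriv_fun_sub (hdiff _ t) (hdiff _ t)]
  linarith [hderiv t (Set.Ioo_subset_Icc_self ht)]
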